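/- Let π : X → Y be a factor map of minimal systems with Y doubly minimal, and let (y₀,x₁) ∈ Y×X with y₁ = π(x₁) not on the orbit of y₀. Then the orbit closure of (y₀,x₁) under the product homeomorphism is all of Y×X. -/

import Mathlib

/-- The group of self-homeomorphisms under composition, so that `T ^ n` (`n : ℤ`)
denotes the `n`-th iterate of `T`. -/
instance Homeomorph.instGroupOld {X : Type*} [TopologicalSpace X] : Group (X ≃ₜ X) where
  mul f g := g.trans f
  one := Homeomorph.refl X
  inv := Homeomorph.symm
  mul_assoc _ _ _ := Homeomorph.ext fun _ => rfl
  one_mul _ := Homeomorph.ext fun _ => rfl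
  mul_one _ := Homeomorph.ext fun _ => rfl
  inv_mul_cancel f := Homeomorph.ext fun x => f.symm_apply_apply x

/-- The orbit closure of a point under a homeomorphism. -/
def orbitCl {X : Type*} [TopologicalSpace X] (T : X ≃ₜ X) (p : X) : Set X :=
  closure {q | ∃ n : ℤ, (T ^ n) p = q}

/-- A (minimal) dynamical system: every orbit closure is everything. -/
def IsMinimalSys {X : Type*} [TopologicalSpace X] (T : X ≃ₜ X) : Prop :=
  ∀ x : X, orbitCl T x = Set.univ

/-- Totally minimal: every nonzero power is minimal. -/
def IsTotallyMinimal {X : Type*} [TopologicalSpace X] (T : X ≃ₜ X) : Prop :=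
  ∀ n : ℤ, n ≠ 0 → IsMinimalSys (T ^ n)

/-- The graph Γ_n = {(T^n x, x) : x ∈ X}. -/
def graphPow {X : Type*} [TopologicalSpace X] (T : X ≃ₜ X) (n : ℤ) : Set (X × X) :=
  {p | ∃ x : X, p = ((T ^ n) x, x)}

/-- POD: totally minimal and for distinct u, v some graph Γ_n (n ≠ 0) lies in the
orbit closure of (u, v) under T × T. -/
def IsPOD {X : Type*} [TopologicalSpace X] (T : X ≃ₜ X) : Prop :=
  IsMinimalSys T ∧ IsTotallyMinimal T ∧
    ∀ u v : X, u ≠ v → ∃ n : ℤ, n ≠ 0 ∧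
      graphPow T n ⊆ orbitCl (T.prodCongr T) (u, v)

/-- Doubly minimal: minimal, and every orbit closure of T × T is either everything
or a graph Γ_m. -/
def IsDoublyMinimal {X : Type*} [TopologicalSpace X] (T : X ≃ₜ X) : Prop :=
  IsMinimalSys T ∧
    ∀ p : X × X, orbitCl (T.prodCongr T) p = Set.univ ∨
      ∃ m : ℤ, orbitCl (T.prodCongr T) p = graphPow T m

/-- A factor map: continuous equivariant surjection. -/
def IsFactorMap {X Y : Type*} [TopologicalSpace X] [TopologicalSpace Y]
    (T : X ≃ₜ X) (S : Y ≃ₜ Y) (π : X → Y) : Prop :=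
  Continuous π ∧ Function.Surjective π ∧ ∀ x, π (T x) = S (π x)

/-- Disjointness: the only closed invariant subset of the product projecting
onto both coordinates is the whole product. -/
def SysDisjoint {X Y : Type*} [TopologicalSpace X] [TopologicalSpace Y]
    (T : X ≃ₜ X) (S : Y ≃ₜ Y) : Prop :=
  ∀ M : Set (X × Y), IsClosed M → (T.prodCongr S) '' M = M →
    Prod.fst '' M = Set.univ → Prod.snd '' M = Set.univ → M = Set.univ

/-- A recurrent point: in the closure of its forward orbit with positive times. -/
def IsRecurrentPt {X : Type*} [TopologicalSpace X] (T : X ≃ₜ X) (x : X) : Prop :=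
  x ∈ closure {q | ∃ n : ℕ, 1 ≤ n ∧ (T ^ n) x = q}

/-- A proximal pair: the orbits come arbitrarily close together. -/
def IsProximal {X : Type*} [PseudoMetricSpace X] (T : X ≃ₜ X) (x x' : X) : Prop :=
  ∀ ε > 0, ∃ n : ℤ, dist ((T ^ n) x) ((T ^ n) x') < ε

/-- A distal point: proximal only to itself. -/
def IsDistalPt {X : Type*} [PseudoMetricSpace X] (T : X ≃ₜ X) (x : X) : Prop :=
  ∀ x', IsProximal T x x' → x' = x

/-- A minimal subset: nonempty, closed, invariant, with all orbits dense in it. -/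
def IsMinimalSubset {X : Type*} [TopologicalSpace X] (T : X ≃ₜ X) (M : Set X) : Prop :=
  M.Nonempty ∧ IsClosed M ∧ (T : X ≃ₜ X) '' M = M ∧
    ∀ p ∈ M, M ⊆ closure {q | ∃ n : ℤ, (T ^ n) p = q}

/-- Topological transitivity. -/
def IsTopTransitive {X : Type*} [TopologicalSpace X] (T : X ≃ₜ X) : Prop :=
  ∀ U V : Set X, IsOpen U → IsOpen V → U.Nonempty → V.Nonempty →
    ∃ n : ℤ, ((T ^ n) '' U ∩ V).Nonempty

/-- Weak mixing: the product system is topologically transitive. -/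
def IsWeaklyMixing {X : Type*} [TopologicalSpace X] (T : X ≃ₜ X) : Prop :=
  IsTopTransitive (T.prodCongr T)


/-!
Let `W` be the orbit closure of `(y₀, x₁)`. Its image under `id × π` is closed (by
compactness) and contains the orbit of `(y₀, π x₁)`, which is dense in `Y × Y` by double
minimality because `π x₁` is off the orbit of `y₀`. So for every `n` some `(Sⁿ y₀, x)` with
`π x = y₀` lies in `W`, i.e. `W` meets the graph of `Sⁿ ∘ π`; as `W` is closed and invariant,
minimality of `X` puts the whole graph in `W`. Finally, for fixed `x` the points `(Sⁿ (π x), x)`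
are dense in `Y × {x}` by minimality of `Y`.
-/

open Set

namespace Homeomorph

variable {A B : Type*} [TopologicalSpace A] [TopologicalSpace B]

theorem semiconj_zpow {f : A → B} {F : A ≃ₜ A} {G : B ≃ₜ B} (h : Function.Semiconj f F G)
    (n : ℤ) : Function.Semiconj f ⇑(F ^ n) ⇑(G ^ n) := by
  induction n using Int.induction_on with
  | zero => exact Function.Semiconj.id_right
  | succ k ih =>
    intro x
    rw [zpow_add_one, zpow_add_one, mul_apply, mul_apply, ih.eq, h.eq]
  | pred k ih =>
    have hinv : Function.Semiconj f F.symm G.symm :=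
      h.inverses_right F.apply_symm_apply G.symm_apply_apply
    intro x
    rw [zpow_sub_one, zpow_sub_one, mul_apply, mul_apply, ih.eq]
    exact congrArg _ (hinv.eq x)

theorem zpow_apply_comm (F : A ≃ₜ A) (m n : ℤ) (x : A) :
    (F ^ m) ((F ^ n) x) = (F ^ n) ((F ^ m) x) := by
  rw [← mul_apply, ← mul_apply, ← zpow_add, ← zpow_add, add_comm]

theorem prodCongr_zpow_apply (F : A ≃ₜ A) (G : B ≃ₜ B) (n : ℤ) (p : A × B) :
    ((F.prodCongr G) ^ n) p = ((F ^ n) p.1, (G ^ n) p.2) :=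
  Prod.ext (semiconj_zpow (f := Prod.fst) (fun _ => rfl) n p)
    (semiconj_zpow (f := Prod.snd) (fun _ => rfl) n p)

end Homeomorph

open Homeomorph

section OrbitClosure

variable {A B : Type*} [TopologicalSpace A] [TopologicalSpace B]

theorem zpow_apply_mem_orbitCl (F : A ≃ₜ A) (p : A) (n : ℤ) : (F ^ n) p ∈ orbitCl F p :=
  subset_closure ⟨n, rfl⟩

theorem self_mem_orbitCl (F : A ≃ₜ A) (p : A) : p ∈ orbitCl F p :=
  zpow_apply_mem_orbitCl F p 0

theorem zpow_apply_mem_orbitCl_of_mem {F : A ≃ₜ A} {p q : A} (hq : q ∈ orbitCl F p)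
    (k : ℤ) : (F ^ k) q ∈ orbitCl F p := by
  have hmaps : MapsTo (F ^ k) {r | ∃ n : ℤ, (F ^ n) p = r} {r | ∃ n : ℤ, (F ^ n) p = r} := by
    rintro _ ⟨n, rfl⟩
    exact ⟨k + n, by rw [zpow_add, mul_apply]⟩
  exact hmaps.closure (F ^ k).continuous hq

theorem orbitCl_subset_of_forall_zpow_mem {F : A ≃ₜ A} {p : A} {C : Set A}
    (hC : IsClosed C) (h : ∀ n : ℤ, (F ^ n) p ∈ C) : orbitCl F p ⊆ C :=
  closure_minimal (by rintro _ ⟨n, rfl⟩; exact h n) hC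

theorem IsMinimalSys.apply_mem_of_forall_zpow {F : A ≃ₜ A} (hF : IsMinimalSys F) {f : A → B}
    (hf : Continuous f) {C : Set B} (hC : IsClosed C) {p : A} (h : ∀ n : ℤ, f ((F ^ n) p) ∈ C)
    (z : A) : f z ∈ C :=
  orbitCl_subset_of_forall_zpow_mem (hC.preimage hf) h (hF p ▸ mem_univ z)

theorem IsDoublyMinimal.orbitCl_prodCongr_eq_univ {S : A ≃ₜ A} (hS : IsDoublyMinimal S)
    {y y' : A} (h : ¬ ∃ n : ℤ, (S ^ n) y = y') : orbitCl (S.prodCongr S) (y, y') = univ := by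
  refine (hS.2 (y, y')).resolve_right ?_
  rintro ⟨m, hm⟩
  obtain ⟨z, hz⟩ : (y, y') ∈ graphPow S m := hm ▸ self_mem_orbitCl _ _
  obtain ⟨rfl, rfl⟩ := Prod.mk.inj hz
  exact h ⟨-m, by rw [← mul_apply, ← zpow_add, neg_add_cancel, zpow_zero, one_apply]⟩

end OrbitClosure

section FactorMap

variable {X Y : Type*} [TopologicalSpace X] [TopologicalSpace Y]
  {T : X ≃ₜ X} {S : Y ≃ₜ Y} {π : X → Y}

theorem IsFactorMap.map_zpow_apply (hπ : IsFactorMap T S π) (n : ℤ) (x : X) :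
    π ((T ^ n) x) = (S ^ n) (π x) :=
  semiconj_zpow hπ.2.2 n x

theorem IsMinimalSys.graph_mem_orbitCl (hT : IsMinimalSys T) (hπ : IsFactorMap T S π)
    {p : Y × X} {n : ℤ} {x : X} (hx : ((S ^ n) (π x), x) ∈ orbitCl (S.prodCongr T) p) (z : X) :
    ((S ^ n) (π z), z) ∈ orbitCl (S.prodCongr T) p := by
  refine hT.apply_mem_of_forall_zpow (f := fun z => ((S ^ n) (π z), z))
    (((S ^ n).continuous.comp hπ.1).prodMk continuous_id) isClosed_closure (p := x)
    (fun k => ?_) z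
  have hk := zpow_apply_mem_orbitCl_of_mem hx k
  rwa [prodCongr_zpow_apply, zpow_apply_comm, ← hπ.map_zpow_apply] at hk

theorem image_orbitCl_prodCongr_eq_univ [CompactSpace X] [CompactSpace Y] [T2Space Y]
    (hπ : IsFactorMap T S π) (hS : IsDoublyMinimal S) {y₀ : Y} {x₁ : X}
    (h : ¬ ∃ n : ℤ, (S ^ n) y₀ = π x₁) :
    Prod.map id π '' orbitCl (S.prodCongr T) (y₀, x₁) = univ := by
  have hclosed : IsClosed (Prod.map id π '' orbitCl (S.prodCongr T) (y₀, x₁)) :=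
    (isClosed_closure.isCompact.image (continuous_id.prodMap hπ.1)).isClosed
  refine eq_univ_of_univ_subset ?_
  rw [← hS.orbitCl_prodCongr_eq_univ h]
  refine orbitCl_subset_of_forall_zpow_mem hclosed fun n => ⟨_, zpow_apply_mem_orbitCl _ _ n, ?_⟩
  rw [prodCongr_zpow_apply, prodCongr_zpow_apply, Prod.map_apply, hπ.map_zpow_apply, id]

end FactorMap

theorem offOrbit_orbitCl_eq_univ {X Y : Type*} [MetricSpace X] [CompactSpace X] [MetricSpace Y] [CompactSpace Y]
    (T : X ≃ₜ X) (S : Y ≃ₜ Y) (π : X → Y) (hπ : IsFactorMap T S π)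
    (hT : IsMinimalSys T) (hS : IsDoublyMinimal S)
    (y₀ : Y) (x₁ : X) (h : ¬ ∃ n : ℤ, (S ^ n) y₀ = π x₁) :
    orbitCl (S.prodCongr T) (y₀, x₁) = Set.univ := by
  have hgraph : ∀ (n : ℤ) (x : X), ((S ^ n) (π x), x) ∈ orbitCl (S.prodCongr T) (y₀, x₁) := by
    intro n x
    obtain ⟨⟨y, x₀⟩, hmem, hq⟩ :
        ((S ^ n) y₀, y₀) ∈ Prod.map id π '' orbitCl (S.prodCongr T) (y₀, x₁) :=
      (image_orbitCl_prodCongr_eq_univ hπ hS h).symm ▸ mem_univ _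
    obtain ⟨rfl, hx₀⟩ := Prod.mk.inj hq
    exact hT.graph_mem_orbitCl hπ (by rwa [hx₀]) x
  refine eq_univ_of_forall fun ⟨y, x⟩ => ?_
  exact hS.1.apply_mem_of_forall_zpow (f := fun y => (y, x)) (by fun_prop) isClosed_closure
    (fun k => hgraph k x) y
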